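/- For every nonnegative integer n, v(4n+2) = v(2n) + a(n) and v(4n+4) = v(2n+2) + a(n). -/

import Mathlib

/-- The value of a word over the digits `{0,1,2}`, read as a (hyper)binary expansion:
`wordVal (x₀ … x_k) = Σ x_i · 2^(k-i)`. -/
def wordVal : List ℕ → ℕ
  | [] => 0
  | d :: w => d * 2 ^ w.length + wordVal w

/-- `Hyp n` is the set of hyperbinary expansions of `n`: words over `{0,1,2}` with
nonzero leading digit whose value is `n` (the empty word is the unique expansion of `0`). -/
def Hyp (n : ℕ) : Set (List ℕ) :=
  {w | (∀ d ∈ w, d ≤ 2) ∧ w.head? ≠ some 0 ∧ wordVal w = n}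

lemma wordVal_append (u v : List ℕ) :
    wordVal (u ++ v) = wordVal u * 2 ^ v.length + wordVal v := by
  induction u with
  | nil => simp [wordVal]
  | cons d t ih =>
    simp only [List.cons_append, wordVal, ih, List.length_append, pow_add, List.append_eq]
    ring

lemma hyp_length_le {n : ℕ} {w : List ℕ} (h : w ∈ Hyp n) : w.length ≤ n := by
  obtain ⟨hd, hh, hv⟩ := h
  cases w with
  | nil => simp
  | cons d t =>
    have hd1 : 1 ≤ d := by
      rcases Nat.eq_zero_or_pos d with h0 | h1
      · exact absurd (by simp [h0]) hh
      · exact h1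
    have : t.length < 2 ^ t.length := Nat.lt_two_pow_self
    have : 2 ^ t.length ≤ wordVal (d :: t) := by
      simp only [wordVal]
      nlinarith
    simp only [List.length_cons]
    omega

lemma hyp_finite (n : ℕ) : (Hyp n).Finite := by
  have : Hyp n ⊆ (fun l : List (Fin 3) => l.map Fin.val) '' {l | l.length ≤ n} := by
    intro w hw
    refine ⟨w.map (fun d => (⟨min d 2, by omega⟩ : Fin 3)), by simpa using hyp_length_le hw, ?_⟩
    dsimp only
    rw [List.map_map]
    conv_rhs => rw [← List.map_id w]
    apply List.map_congr_left
    intro d hd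
    have : d ≤ 2 := hw.1 d hd
    simp only [Function.comp_apply, Fin.val_mk, id_eq]
    omega
  exact ((List.finite_length_le ..).image _).subset this

/-- Single-step reduction of type `→` : `(x02y, x10y)` or `(2y, 10y)`. -/
def StepArrow (a b : List ℕ) : Prop :=
  (∃ x y : List ℕ, a = x ++ 0 :: 2 :: y ∧ b = x ++ 1 :: 0 :: y) ∨
    (∃ y : List ℕ, a = 2 :: y ∧ b = 1 :: 0 :: y)

/-- Single-step reduction of type `↠` : `(x12y, x20y)`. -/
def StepDouble (a b : List ℕ) : Prop :=
  ∃ x y : List ℕ, a = x ++ 1 :: 2 :: y ∧ b = x ++ 2 :: 0 :: y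

/-- A single-step reduction (of either type). -/
def Step (a b : List ℕ) : Prop := StepArrow a b ∨ StepDouble a b

lemma step_src_ne_nil {a b : List ℕ} (h : Step a b) : a ≠ [] := by
  rcases h with (⟨x, y, ha, -⟩ | ⟨y, ha, -⟩) | ⟨x, y, ha, -⟩ <;> subst ha <;> simp

lemma step_append {u v : List ℕ} (s : List ℕ) (h : Step u v) : Step (u ++ s) (v ++ s) := by
  rcases h with (⟨x, y, ha, hb⟩ | ⟨y, ha, hb⟩) | ⟨x, y, ha, hb⟩
  · exact Or.inl (Or.inl ⟨x, y ++ s, by simp [ha], by simp [hb]⟩)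
  · exact Or.inl (Or.inr ⟨y ++ s, by simp [ha], by simp [hb]⟩)
  · exact Or.inr ⟨x, y ++ s, by simp [ha], by simp [hb]⟩

/-- Structure of a step: either it is a "crossing" step affecting the last two digits,
or it preserves the last digit and is a step on the prefixes. -/
lemma step_cases {a b : List ℕ} (h : Step a b) :
    (∃ u v d, a = u ++ [d] ∧ b = v ++ [d] ∧ Step u v) ∨
    (∃ x, a = x ++ [0, 2] ∧ b = x ++ [1, 0]) ∨
    (a = [2] ∧ b = [1, 0]) ∨
    (∃ x, a = x ++ [1, 2] ∧ b = x ++ [2, 0]) := by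
  rcases h with (⟨x, y, ha, hb⟩ | ⟨y, ha, hb⟩) | ⟨x, y, ha, hb⟩
  · rcases y.eq_nil_or_concat with rfl | ⟨y', d, rfl⟩
    · exact Or.inr (Or.inl ⟨x, by simpa using ha, by simpa using hb⟩)
    · refine Or.inl ⟨x ++ 0 :: 2 :: y', x ++ 1 :: 0 :: y', d, by simp [ha], by simp [hb],
        Or.inl (Or.inl ⟨x, y', rfl, rfl⟩)⟩
  · rcases y.eq_nil_or_concat with rfl | ⟨y', d, rfl⟩
    · exact Or.inr (Or.inr (Or.inl ⟨by simpa using ha, by simpa using hb⟩))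
    · refine Or.inl ⟨2 :: y', 1 :: 0 :: y', d, by simp [ha], by simp [hb],
        Or.inl (Or.inr ⟨y', rfl, rfl⟩)⟩
  · rcases y.eq_nil_or_concat with rfl | ⟨y', d, rfl⟩
    · exact Or.inr (Or.inr (Or.inr ⟨x, by simpa using ha, by simpa using hb⟩))
    · refine Or.inl ⟨x ++ 1 :: 2 :: y', x ++ 2 :: 0 :: y', d, by simp [ha], by simp [hb],
        Or.inr ⟨x, y', rfl, rfl⟩⟩

/-- Appending a digit to a hyperbinary expansion. -/
lemma mem_hyp_append {m d : ℕ} {u : List ℕ} (h : u ∈ Hyp m) (hd : d ≤ 2)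
    (h0 : u = [] → d ≠ 0) : u ++ [d] ∈ Hyp (2 * m + d) := by
  obtain ⟨hdig, hh, hv⟩ := h
  refine ⟨?_, ?_, ?_⟩
  · intro e he
    rcases List.mem_append.1 he with he | he
    · exact hdig e he
    · simp at he; omega
  · cases u with
    | nil => simpa using fun hd0 => h0 rfl hd0
    | cons e t => simpa using hh
  · rw [wordVal_append, hv]; simp [wordVal]; ring

/-- Splitting off the last digit of a nonempty hyperbinary expansion. -/
lemma hyp_last {m : ℕ} {w : List ℕ} (h : w ∈ Hyp m) (hw : w ≠ []) :
    ∃ u d k, w = u ++ [d] ∧ d ≤ 2 ∧ m = 2 * k + d ∧ u ∈ Hyp k := by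
  obtain ⟨hdig, hh, hv⟩ := h
  rcases w.eq_nil_or_concat with rfl | ⟨u, d, rfl⟩
  · exact absurd rfl hw
  simp only [List.concat_eq_append] at hdig hh hv hw ⊢
  refine ⟨u, d, wordVal u, rfl, hdig d (by simp), ?_, ?_, ?_, rfl⟩
  · rw [← hv, wordVal_append]; simp [wordVal]; ring
  · exact fun e he => hdig e (by simp [he])
  · cases u with
    | nil => simp
    | cons e t => simpa using hh

lemma hyp_odd_last {k : ℕ} {w : List ℕ} (h : w ∈ Hyp (2 * k + 1)) :
    ∃ u, w = u ++ [1] ∧ u ∈ Hyp k := by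
  have hw : w ≠ [] := by
    rintro rfl
    have := h.2.2
    simp [wordVal] at this
  obtain ⟨u, d, k', rfl, hd, hk, hu⟩ := hyp_last h hw
  have : d = 1 ∧ k' = k := by omega
  exact ⟨u, by rw [this.1], this.2 ▸ hu⟩

/-- `bFun n` is the number of hyperbinary expansions of `n`. -/
noncomputable def bFun (n : ℕ) : ℕ := (Hyp n).ncard

/-- The set of arcs of the graph `A(n)`: labeled single-step reductions between
hyperbinary expansions of `n`. -/
def arcs (n : ℕ) : Set (List ℕ × List ℕ) :=
  {p | p.1 ∈ Hyp n ∧ p.2 ∈ Hyp n ∧ Step p.1 p.2}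

/-- `aFun n` is the number of arcs of `A(n)`. -/
noncomputable def aFun (n : ℕ) : ℕ := (arcs n).ncard

/-- The cyclomatic number `v(n) = a(n) - b(n) + 1` of the connected graph `A(n)`. -/
noncomputable def vFun (n : ℕ) : ℕ := aFun n + 1 - bFun n

lemma arcs_finite (n : ℕ) : (arcs n).Finite :=
  ((hyp_finite n).prod (hyp_finite n)).subset (fun p hp => ⟨hp.1, hp.2.1⟩)

lemma hyp_ne_nil {m : ℕ} {w : List ℕ} (h : w ∈ Hyp m) (hm : 0 < m) : w ≠ [] := by
  rintro rfl
  have := h.2.2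
  simp [wordVal] at this
  omega

lemma getLast?_app (u : List ℕ) (d : ℕ) : (u ++ [d]).getLast? = some d := by
  simp

lemma hyp_4n2 (n : ℕ) :
    Hyp (4 * n + 2) = (fun u => u ++ [2]) '' Hyp (2 * n) ∪ (fun u => u ++ [1, 0]) '' Hyp n := by
  ext w
  constructor
  · intro hw
    obtain ⟨u, d, k, rfl, hd, hk, hu⟩ := hyp_last hw (hyp_ne_nil hw (by omega))
    have : d = 0 ∨ d = 2 := by omega
    rcases this with rfl | rfl
    · have hk' : k = 2 * n + 1 := by omega
      subst hk'
      obtain ⟨u', rfl, hu'⟩ := hyp_odd_last hu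
      exact Or.inr ⟨u', hu', by simp⟩
    · exact Or.inl ⟨u, by rwa [show 2 * n = k by omega], rfl⟩
  · rintro (⟨u, hu, rfl⟩ | ⟨u, hu, rfl⟩)
    · have := mem_hyp_append (d := 2) hu (by norm_num) (fun _ => by norm_num)
      rwa [show 2 * (2 * n) + 2 = 4 * n + 2 by ring] at this
    · have h1 : u ++ [1] ∈ Hyp (2 * n + 1) := mem_hyp_append hu (by norm_num) (fun _ => by norm_num)
      have h2 := mem_hyp_append (d := 0) h1 (by norm_num) (fun h => by simp at h)
      rw [show 2 * (2 * n + 1) + 0 = 4 * n + 2 by ring] at h2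
      simpa using h2

lemma hyp_4n4 (n : ℕ) :
    Hyp (4 * n + 4) = (fun u => u ++ [0]) '' Hyp (2 * n + 2) ∪ (fun u => u ++ [1, 2]) '' Hyp n := by
  ext w
  constructor
  · intro hw
    obtain ⟨u, d, k, rfl, hd, hk, hu⟩ := hyp_last hw (hyp_ne_nil hw (by omega))
    have : d = 0 ∨ d = 2 := by omega
    rcases this with rfl | rfl
    · exact Or.inl ⟨u, by rwa [show 2 * n + 2 = k by omega], rfl⟩
    · have hk' : k = 2 * n + 1 := by omega
      subst hk'
      obtain ⟨u', rfl, hu'⟩ := hyp_odd_last hu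
      exact Or.inr ⟨u', hu', by simp⟩
  · rintro (⟨u, hu, rfl⟩ | ⟨u, hu, rfl⟩)
    · have h2 := mem_hyp_append (d := 0) hu (by norm_num) (fun h => absurd h (hyp_ne_nil hu (by omega)))
      rwa [show 2 * (2 * n + 2) + 0 = 4 * n + 4 by ring] at h2
    · have h1 : u ++ [1] ∈ Hyp (2 * n + 1) := mem_hyp_append hu (by norm_num) (fun _ => by norm_num)
      have h2 := mem_hyp_append (d := 2) h1 (by norm_num) (fun h => by simp at h)
      rw [show 2 * (2 * n + 1) + 2 = 4 * n + 4 by ring] at h2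
      simpa using h2

lemma ncard_two_images {A B : Set (List ℕ)} (hA : A.Finite) (hB : B.Finite)
    (s t : List ℕ) (hst : s.getLast? ≠ t.getLast?) (hs : s ≠ []) (ht : t ≠ []) :
    ((fun u => u ++ s) '' A ∪ (fun u => u ++ t) '' B).ncard = A.ncard + B.ncard := by
  rw [Set.ncard_union_eq ?_ (hA.image _) (hB.image _),
    Set.ncard_image_of_injective _ (List.append_left_injective s),
    Set.ncard_image_of_injective _ (List.append_left_injective t)]
  rw [Set.disjoint_left]
  rintro w ⟨u, -, rfl⟩ ⟨v, -, hv⟩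
  simp only at hv
  apply hst
  rw [← List.getLast?_append_of_ne_nil u hs, ← List.getLast?_append_of_ne_nil v ht, hv]

lemma bFun_4n2 (n : ℕ) : bFun (4 * n + 2) = bFun (2 * n) + bFun n := by
  unfold bFun
  rw [hyp_4n2, ncard_two_images (hyp_finite _) (hyp_finite _) _ _ (by simp) (by simp) (by simp)]
lemma step_tgt_ne_nil {a b : List ℕ} (h : Step a b) : b ≠ [] := by
  rcases h with (⟨x, y, -, hb⟩ | ⟨y, -, hb⟩) | ⟨x, y, -, hb⟩ <;> subst hb <;> simp

lemma hyp_of_append {k d : ℕ} {u : List ℕ} (h : u ++ [d] ∈ Hyp (2 * k + d)) (hu : u ≠ []) :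
    u ∈ Hyp k := by
  obtain ⟨hdig, hh, hv⟩ := h
  refine ⟨fun e he => hdig e (by simp [he]), ?_, ?_⟩
  · cases u with
    | nil => exact absurd rfl hu
    | cons e t => simpa using hh
  · rw [wordVal_append] at hv
    simp [wordVal] at hv
    omega

lemma hyp_of_append' {m k d : ℕ} {u : List ℕ} (h : u ++ [d] ∈ Hyp m) (hu : u ≠ [])
    (hk : m = 2 * k + d) : u ∈ Hyp k := hyp_of_append (hk ▸ h) hu

/-- A step between words ending in the digit 1 restricts to a step on the prefixes. -/
lemma step_drop_one {a b u' v' : List ℕ} (h : Step a b) (ha : a = u' ++ [1])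
    (hb : b = v' ++ [1]) : Step u' v' := by
  subst ha hb
  rcases step_cases h with ⟨u, v, d, ha', hb', hs⟩ | ⟨x, ha', hb'⟩ | ⟨ha', hb'⟩ | ⟨x, ha', hb'⟩
  · have hd : d = 1 := by
      have := congrArg List.getLast? ha'
      simp at this
      omega
    subst hd
    rw [List.append_cancel_right ha', List.append_cancel_right hb']
    exact hs
  · have := congrArg List.getLast? hb'
    simp [List.getLast?_append] at this
  · have := congrArg List.getLast? hb'
    simp [List.getLast?_append] at this
  · have := congrArg List.getLast? hb'
    simp [List.getLast?_append] at this

/-- The crossing arc of `A(4n+2)` associated to an expansion of `n`. -/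
def crossA (x : List ℕ) : List ℕ × List ℕ :=
  (if x = [] then [2] else x ++ [0, 2], x ++ [1, 0])

/-- The crossing arc of `A(4n+4)` associated to an expansion of `n`. -/
def crossB (x : List ℕ) : List ℕ × List ℕ := (x ++ [1, 2], x ++ [2, 0])

def pmap (s : List ℕ) : List ℕ × List ℕ → List ℕ × List ℕ := fun p => (p.1 ++ s, p.2 ++ s)

lemma mem_hyp_10 {n : ℕ} {w : List ℕ} (hw : w ∈ Hyp n) : w ++ [1, 0] ∈ Hyp (4 * n + 2) := by
  have h1 : w ++ [1] ∈ Hyp (2 * n + 1) := mem_hyp_append hw (by norm_num) (fun _ => by norm_num)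
  have h2 := mem_hyp_append (d := 0) h1 (by norm_num) (fun h => by simp at h)
  rw [show 2 * (2 * n + 1) + 0 = 4 * n + 2 by ring] at h2
  simpa using h2

lemma mem_hyp_2 {n : ℕ} {w : List ℕ} (hw : w ∈ Hyp (2 * n)) : w ++ [2] ∈ Hyp (4 * n + 2) := by
  have := mem_hyp_append (d := 2) hw (by norm_num) (fun _ => by norm_num)
  rwa [show 2 * (2 * n) + 2 = 4 * n + 2 by ring] at this

lemma mem_hyp_12 {n : ℕ} {w : List ℕ} (hw : w ∈ Hyp n) : w ++ [1, 2] ∈ Hyp (4 * n + 4) := by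
  have h1 : w ++ [1] ∈ Hyp (2 * n + 1) := mem_hyp_append hw (by norm_num) (fun _ => by norm_num)
  have h2 := mem_hyp_append (d := 2) h1 (by norm_num) (fun h => by simp at h)
  rw [show 2 * (2 * n + 1) + 2 = 4 * n + 4 by ring] at h2
  simpa using h2

lemma mem_hyp_0 {n : ℕ} {w : List ℕ} (hw : w ∈ Hyp (2 * n + 2)) : w ++ [0] ∈ Hyp (4 * n + 4) := by
  have := mem_hyp_append (d := 0) hw (by norm_num) (fun h => absurd h (hyp_ne_nil hw (by omega)))
  rwa [show 2 * (2 * n + 2) + 0 = 4 * n + 4 by ring] at this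

lemma mem_hyp_20 {n : ℕ} {w : List ℕ} (hw : w ∈ Hyp n) : w ++ [2, 0] ∈ Hyp (4 * n + 4) := by
  have h1 : w ++ [2] ∈ Hyp (2 * n + 2) := by
    have := mem_hyp_append (d := 2) hw (by norm_num) (fun _ => by norm_num)
    simpa using this
  have := mem_hyp_0 h1
  simpa using this

lemma arcs_4n2 (n : ℕ) :
    arcs (4 * n + 2) =
      pmap [2] '' arcs (2 * n) ∪ pmap [1, 0] '' arcs n ∪ crossA '' Hyp n := by
  ext ⟨a, b⟩
  constructor
  · rintro ⟨ha, hb, hs⟩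
    dsimp only at ha hb hs
    rcases step_cases hs with ⟨u, v, d, ha', hb', hs'⟩ | ⟨x, ha', hb'⟩ | ⟨ha', hb'⟩ | ⟨x, ha', hb'⟩
    · -- suffix-preserving step
      have hu : u ≠ [] := step_src_ne_nil hs'
      have hv : v ≠ [] := step_tgt_ne_nil hs'
      have hd2 : d ≤ 2 := ha.1 d (by simp [ha'])
      have hval : 2 * wordVal u + d = 4 * n + 2 := by
        have := ha.2.2
        rw [ha', wordVal_append] at this
        simp [wordVal] at this
        omega
      have hd02 : d = 0 ∨ d = 2 := by omega
      rcases hd02 with rfl | rfl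
      · -- d = 0 : both end with [1,0]
        have hu' : u ∈ Hyp (2 * n + 1) := hyp_of_append' (ha' ▸ ha) hu (by omega)
        have hv' : v ∈ Hyp (2 * n + 1) := hyp_of_append' (hb' ▸ hb) hv (by omega)
        obtain ⟨u', hue, hu''⟩ := hyp_odd_last hu'
        obtain ⟨v', hve, hv''⟩ := hyp_odd_last hv'
        refine Or.inl (Or.inr ⟨(u', v'), ⟨hu'', hv'', step_drop_one hs' hue hve⟩, ?_⟩)
        simp only [pmap, Prod.mk.injEq]
        constructor
        · rw [ha', hue]; simp
        · rw [hb', hve]; simp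
      · -- d = 2 : both end with [2]
        have hu' : u ∈ Hyp (2 * n) := hyp_of_append' (ha' ▸ ha) hu (by omega)
        have hv' : v ∈ Hyp (2 * n) := hyp_of_append' (hb' ▸ hb) hv (by omega)
        exact Or.inl (Or.inl ⟨(u, v), ⟨hu', hv', hs'⟩, by simp [pmap, ha', hb']⟩)
    · -- crossing arrow with x ++ [0,2]
      have hx : x ≠ [] := by
        rintro rfl
        have := ha.2.1
        simp [ha'] at this
      have hxh : x ∈ Hyp n := by
        refine ⟨fun e he => ha.1 e (by simp [ha', he]), ?_, ?_⟩
        · cases x with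
          | nil => exact absurd rfl hx
          | cons e t =>
            have := ha.2.1
            simpa [ha'] using this
        · have := ha.2.2
          rw [ha', wordVal_append] at this
          simp [wordVal] at this
          omega
      refine Or.inr ⟨x, hxh, ?_⟩
      simp [crossA, hx, ha', hb']
    · -- crossing arrow [2] → [1,0]
      have hn : n = 0 := by
        have := ha.2.2
        rw [ha'] at this
        simp [wordVal] at this
        omega
      refine Or.inr ⟨[], ?_, ?_⟩
      · subst hn; exact ⟨by simp, by simp, rfl⟩
      · simp [crossA, ha', hb']
    · -- crossing double: impossible mod 4
      exfalso
      have := ha.2.2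
      rw [ha', wordVal_append] at this
      simp [wordVal] at this
      omega
  · rintro ((⟨⟨u, v⟩, ⟨hu, hv, hs⟩, heq⟩ | ⟨⟨u, v⟩, ⟨hu, hv, hs⟩, heq⟩) | ⟨x, hx, heq⟩) <;>
      (rw [← heq]; clear heq)
    · exact ⟨mem_hyp_2 hu, mem_hyp_2 hv, step_append [2] hs⟩
    · exact ⟨mem_hyp_10 hu, mem_hyp_10 hv, step_append [1, 0] hs⟩
    · rcases eq_or_ne x [] with rfl | hxne
      · have hn : n = 0 := by
          have := hx.2.2; simpa [wordVal] using this.symm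
        subst hn
        have hcx : crossA [] = ([2], [1, 0]) := by simp [crossA]
        rw [hcx]
        refine ⟨⟨by simp, by simp, by simp [wordVal]⟩, ⟨by simp, by simp, by simp [wordVal]⟩, ?_⟩
        exact Or.inl (Or.inr ⟨[], rfl, rfl⟩)
      · have hcx : crossA x = (x ++ [0, 2], x ++ [1, 0]) := by simp [crossA, hxne]
        rw [hcx]
        have ha1 : x ++ [0] ∈ Hyp (2 * n) := by
          have := mem_hyp_append (d := 0) hx (by norm_num) (fun h => absurd h hxne)
          simpa using this
        have ha2 : x ++ [0, 2] ∈ Hyp (4 * n + 2) := by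
          have := mem_hyp_2 ha1
          simpa using this
        exact ⟨ha2, mem_hyp_10 hx, Or.inl (Or.inl ⟨x, [], rfl, rfl⟩)⟩
lemma arcs_4n4 (n : ℕ) :
    arcs (4 * n + 4) =
      pmap [0] '' arcs (2 * n + 2) ∪ pmap [1, 2] '' arcs n ∪ crossB '' Hyp n := by
  ext ⟨a, b⟩
  constructor
  · rintro ⟨ha, hb, hs⟩
    dsimp only at ha hb hs
    rcases step_cases hs with ⟨u, v, d, ha', hb', hs'⟩ | ⟨x, ha', hb'⟩ | ⟨ha', hb'⟩ | ⟨x, ha', hb'⟩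
    · have hu : u ≠ [] := step_src_ne_nil hs'
      have hv : v ≠ [] := step_tgt_ne_nil hs'
      have hd2 : d ≤ 2 := ha.1 d (by simp [ha'])
      have hval : 2 * wordVal u + d = 4 * n + 4 := by
        have := ha.2.2
        rw [ha', wordVal_append] at this
        simp [wordVal] at this
        omega
      have hd02 : d = 0 ∨ d = 2 := by omega
      rcases hd02 with rfl | rfl
      · have hu' : u ∈ Hyp (2 * n + 2) := hyp_of_append' (ha' ▸ ha) hu (by omega)
        have hv' : v ∈ Hyp (2 * n + 2) := hyp_of_append' (hb' ▸ hb) hv (by omega)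
        exact Or.inl (Or.inl ⟨(u, v), ⟨hu', hv', hs'⟩, by simp [pmap, ha', hb']⟩)
      · have hu' : u ∈ Hyp (2 * n + 1) := hyp_of_append' (ha' ▸ ha) hu (by omega)
        have hv' : v ∈ Hyp (2 * n + 1) := hyp_of_append' (hb' ▸ hb) hv (by omega)
        obtain ⟨u', hue, hu''⟩ := hyp_odd_last hu'
        obtain ⟨v', hve, hv''⟩ := hyp_odd_last hv'
        refine Or.inl (Or.inr ⟨(u', v'), ⟨hu'', hv'', step_drop_one hs' hue hve⟩, ?_⟩)
        simp only [pmap, Prod.mk.injEq]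
        constructor
        · rw [ha', hue]; simp
        · rw [hb', hve]; simp
    · exfalso
      have := ha.2.2
      rw [ha', wordVal_append] at this
      simp [wordVal] at this
      omega
    · exfalso
      have := ha.2.2
      rw [ha'] at this
      simp [wordVal] at this
    · have hxh : x ∈ Hyp n := by
        refine ⟨fun e he => ha.1 e (by simp [ha', he]), ?_, ?_⟩
        · cases x with
          | nil => simp
          | cons e t =>
            have := ha.2.1
            simpa [ha'] using this
        · have := ha.2.2
          rw [ha', wordVal_append] at this
          simp [wordVal] at this
          omega
      exact Or.inr ⟨x, hxh, by simp [crossB, ha', hb']⟩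
  · rintro ((⟨⟨u, v⟩, ⟨hu, hv, hs⟩, heq⟩ | ⟨⟨u, v⟩, ⟨hu, hv, hs⟩, heq⟩) | ⟨x, hx, heq⟩) <;>
      (rw [← heq]; clear heq)
    · exact ⟨mem_hyp_0 hu, mem_hyp_0 hv, step_append [0] hs⟩
    · exact ⟨mem_hyp_12 hu, mem_hyp_12 hv, step_append [1, 2] hs⟩
    · exact ⟨mem_hyp_12 hx, mem_hyp_20 hx, Or.inr ⟨x, [], rfl, rfl⟩⟩

lemma pmap_inj (s : List ℕ) : Function.Injective (pmap s) := by
  rintro ⟨a, b⟩ ⟨c, d⟩ h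
  simp only [pmap, Prod.mk.injEq] at h ⊢
  exact ⟨List.append_cancel_right h.1, List.append_cancel_right h.2⟩

lemma crossA_inj : Function.Injective crossA := by
  intro x y h
  have := congrArg Prod.snd h
  simp only [crossA] at this
  exact List.append_cancel_right this

lemma crossB_inj : Function.Injective crossB := by
  intro x y h
  have := congrArg Prod.snd h
  simp only [crossB] at this
  exact List.append_cancel_right this

lemma crossA_fst_getLast (x : List ℕ) : (crossA x).1.getLast? = some 2 := by
  rcases eq_or_ne x [] with rfl | hx
  · simp [crossA]
  · simp [crossA, hx]
lemma bFun_4n4 (n : ℕ) : bFun (4 * n + 4) = bFun (2 * n + 2) + bFun n := by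
  unfold bFun
  rw [hyp_4n4, ncard_two_images (hyp_finite _) (hyp_finite _) _ _ (by simp) (by simp) (by simp)]

lemma aFun_4n2 (n : ℕ) : aFun (4 * n + 2) = aFun (2 * n) + aFun n + bFun n := by
  unfold aFun bFun
  rw [arcs_4n2]
  have hE2 := (arcs_finite (2 * n)).image (pmap [2])
  have hE10 := (arcs_finite n).image (pmap [1, 0])
  have hC := (hyp_finite n).image crossA
  have d1 : Disjoint (pmap [2] '' arcs (2 * n)) (pmap [1, 0] '' arcs n) := by
    rw [Set.disjoint_left]
    rintro p ⟨q, -, rfl⟩ ⟨r, -, hr⟩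
    have := congrArg (fun p : List ℕ × List ℕ => p.2.getLast?) hr
    simp [pmap] at this
  have d2 : Disjoint (pmap [2] '' arcs (2 * n)) (crossA '' Hyp n) := by
    rw [Set.disjoint_left]
    rintro p ⟨q, -, rfl⟩ ⟨r, -, hr⟩
    have := congrArg (fun p : List ℕ × List ℕ => p.2.getLast?) hr
    simp [pmap, crossA] at this
  have d3 : Disjoint (pmap [1, 0] '' arcs n) (crossA '' Hyp n) := by
    rw [Set.disjoint_left]
    rintro p ⟨q, -, rfl⟩ ⟨r, -, hr⟩
    have := congrArg (fun p : List ℕ × List ℕ => p.1.getLast?) hr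
    rw [crossA_fst_getLast] at this
    simp [pmap] at this
  rw [Set.ncard_union_eq (Set.disjoint_union_left.mpr ⟨d2, d3⟩) (hE2.union hE10) hC,
    Set.ncard_union_eq d1 hE2 hE10,
    Set.ncard_image_of_injective _ (pmap_inj [2]),
    Set.ncard_image_of_injective _ (pmap_inj [1, 0]),
    Set.ncard_image_of_injective _ crossA_inj]

lemma aFun_4n4 (n : ℕ) : aFun (4 * n + 4) = aFun (2 * n + 2) + aFun n + bFun n := by
  unfold aFun bFun
  rw [arcs_4n4]
  have hE0 := (arcs_finite (2 * n + 2)).image (pmap [0])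
  have hE12 := (arcs_finite n).image (pmap [1, 2])
  have hC := (hyp_finite n).image crossB
  have d1 : Disjoint (pmap [0] '' arcs (2 * n + 2)) (pmap [1, 2] '' arcs n) := by
    rw [Set.disjoint_left]
    rintro p ⟨q, -, rfl⟩ ⟨r, -, hr⟩
    have := congrArg (fun p : List ℕ × List ℕ => p.1.getLast?) hr
    simp [pmap] at this
  have d2 : Disjoint (pmap [0] '' arcs (2 * n + 2)) (crossB '' Hyp n) := by
    rw [Set.disjoint_left]
    rintro p ⟨q, -, rfl⟩ ⟨r, -, hr⟩
    have := congrArg (fun p : List ℕ × List ℕ => p.1.getLast?) hr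
    simp [pmap, crossB] at this
  have d3 : Disjoint (pmap [1, 2] '' arcs n) (crossB '' Hyp n) := by
    rw [Set.disjoint_left]
    rintro p ⟨q, -, rfl⟩ ⟨r, -, hr⟩
    have := congrArg (fun p : List ℕ × List ℕ => p.2.getLast?) hr
    simp [pmap, crossB] at this
  rw [Set.ncard_union_eq (Set.disjoint_union_left.mpr ⟨d2, d3⟩) (hE0.union hE12) hC,
    Set.ncard_union_eq d1 hE0 hE12,
    Set.ncard_image_of_injective _ (pmap_inj [0]),
    Set.ncard_image_of_injective _ (pmap_inj [1, 2]),
    Set.ncard_image_of_injective _ crossB_inj]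
lemma hyp_zero {w : List ℕ} (h : w ∈ Hyp 0) : w = [] := by
  cases w with
  | nil => rfl
  | cons d t =>
    exfalso
    obtain ⟨-, hh, hv⟩ := h
    have hd : d ≠ 0 := by simpa using hh
    have h1 : 0 < 2 ^ t.length := Nat.pow_pos (by norm_num)
    have h2 : 1 ≤ d := Nat.one_le_iff_ne_zero.2 hd
    simp only [wordVal] at hv
    nlinarith

/-- Uniqueness of the binary (2-free) expansion. -/
lemma binary_unique : ∀ m : ℕ, ∀ w w' : List ℕ, w ∈ Hyp m → w' ∈ Hyp m →
    2 ∉ w → 2 ∉ w' → w = w' := by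
  intro m
  induction m using Nat.strong_induction_on with
  | _ m ih =>
    intro w w' hw hw' h2 h2'
    rcases Nat.eq_zero_or_pos m with rfl | hm
    · rw [hyp_zero hw, hyp_zero hw']
    obtain ⟨u, d, k, rfl, hd, hk, hu⟩ := hyp_last hw (hyp_ne_nil hw hm)
    obtain ⟨u', d', k', rfl, hd', hk', hu'⟩ := hyp_last hw' (hyp_ne_nil hw' hm)
    have hdd : d ≠ 2 := fun h => h2 (by simp [h])
    have hdd' : d' ≠ 2 := fun h => h2' (by simp [h])
    have : d = d' ∧ k = k' := by omega
    obtain ⟨rfl, rfl⟩ := this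
    have hk2 : k < m := by omega
    rw [ih k hk2 u u' hu hu' (fun h => h2 (by simp [h])) (fun h => h2' (by simp [h]))]

lemma first_two {w : List ℕ} (h : (2 : ℕ) ∈ w) : ∃ x y, w = x ++ 2 :: y ∧ (2 : ℕ) ∉ x := by
  induction w with
  | nil => simp at h
  | cons d t iht =>
    rcases eq_or_ne d 2 with rfl | hd
    · exact ⟨[], t, rfl, by simp⟩
    · have h2t : (2 : ℕ) ∈ t := by
        rcases List.mem_cons.1 h with h | h
        · exact absurd h.symm hd
        · exact h
      obtain ⟨x, y, rfl, hx⟩ := iht h2t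
      exact ⟨d :: x, y, rfl, by simp [hx, Ne.symm hd]⟩

lemma exists_out_arc {m : ℕ} {w : List ℕ} (hw : w ∈ Hyp m) (h2 : (2 : ℕ) ∈ w) :
    ∃ b, (w, b) ∈ arcs m := by
  obtain ⟨x, y, rfl, hx⟩ := first_two h2
  obtain ⟨hdig, hh, hv⟩ := hw
  rcases x.eq_nil_or_concat with rfl | ⟨x', d, rfl⟩
  · -- w = 2 :: y
    refine ⟨1 :: 0 :: y, ⟨hdig, hh, hv⟩, ⟨?_, ?_, ?_⟩, Or.inl (Or.inr ⟨y, rfl, rfl⟩)⟩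
    · intro e he
      simp only [List.mem_cons] at he
      rcases he with rfl | rfl | he
      · norm_num
      · norm_num
      · exact hdig e (by simp [he])
    · simp
    · rw [← hv]
      simp [wordVal, pow_succ]
      ring
  · simp only [List.concat_eq_append] at hx hdig hh hv ⊢
    have hd2 : d ≤ 2 := hdig d (by simp)
    have hdne : d ≠ 2 := fun h => hx (by simp [h])
    have hw' : (x' ++ [d]) ++ 2 :: y ∈ Hyp m := ⟨hdig, hh, hv⟩
    have harr : x' ++ [d] ++ 2 :: y = x' ++ d :: 2 :: y := by simp
    have hdigs : ∀ (c : ℕ), c ≤ 2 → ∀ e ∈ x' ++ c :: 0 :: y, e ≤ 2 := by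
      intro c hc e he
      simp only [List.mem_append, List.mem_cons] at he
      rcases he with he | rfl | rfl | he
      · exact hdig e (by simp [he])
      · exact hc
      · norm_num
      · exact hdig e (by simp [he])
    have hheadgen : ∀ (c : ℕ) (z : List ℕ), c ≠ 0 → (x' ++ c :: z).head? ≠ some 0 := by
      intro c z hc
      cases x' with
      | nil => simpa using hc
      | cons e t =>
        have : (e :: t ++ [d] ++ 2 :: y).head? = some e := by simp
        rw [this] at hh
        simpa using hh
    have hvalgen : ∀ c : ℕ, c = d + 1 →
        wordVal (x' ++ c :: 0 :: y) = m := by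
      intro c hc
      subst hc
      rw [← hv]
      rw [show x' ++ [d] ++ 2 :: y = x' ++ (d :: 2 :: y) by simp]
      rw [wordVal_append, wordVal_append]
      simp only [wordVal, List.length_cons, pow_succ]
      ring
    rcases (by omega : d = 0 ∨ d = 1) with rfl | rfl
    · refine ⟨x' ++ 1 :: 0 :: y, hw', ⟨?_, ?_, ?_⟩, Or.inl (Or.inl ⟨x', y, by simp, rfl⟩)⟩
      · exact hdigs 1 (by norm_num)
      · exact hheadgen 1 (0 :: y) one_ne_zero
      · exact hvalgen 1 (by norm_num)
    · refine ⟨x' ++ 2 :: 0 :: y, hw', ⟨?_, ?_, ?_⟩, Or.inr ⟨x', y, by simp, rfl⟩⟩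
      · exact hdigs 2 (by norm_num)
      · exact hheadgen 2 (0 :: y) two_ne_zero
      · exact hvalgen 2 (by norm_num)

lemma bFun_le (m : ℕ) : bFun m ≤ aFun m + 1 := by
  classical
  set S : Set (List ℕ) := {w | w ∈ Hyp m ∧ (2 : ℕ) ∈ w} with hS
  set T : Set (List ℕ) := {w | w ∈ Hyp m ∧ (2 : ℕ) ∉ w} with hT
  have hST : Hyp m = S ∪ T := by
    ext w
    simp only [hS, hT, Set.mem_union, Set.mem_setOf_eq]
    tauto
  have hSfin : S.Finite := (hyp_finite m).subset (fun w hw => hw.1)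
  have hTfin : T.Finite := (hyp_finite m).subset (fun w hw => hw.1)
  have hT1 : T.ncard ≤ 1 := by
    rcases T.eq_empty_or_nonempty with he | ⟨w0, hw0⟩
    · simp [he]
    · have hsub : T ⊆ {w0} := by
        intro w hw
        have := binary_unique m w w0 hw.1 hw0.1 hw.2 hw0.2
        simp [this]
      calc T.ncard ≤ ({w0} : Set (List ℕ)).ncard := Set.ncard_le_ncard hsub (Set.finite_singleton _)
        _ = 1 := Set.ncard_singleton _
  have hSa : S.ncard ≤ aFun m := by
    set f : List ℕ → List ℕ × List ℕ :=
      fun w => (w, if h : ∃ b, (w, b) ∈ arcs m then h.choose else []) with hf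
    have hinj : Set.InjOn f S := by
      intro w _ w' _ h
      exact congrArg Prod.fst h
    have hsub : f '' S ⊆ arcs m := by
      rintro p ⟨w, hw, rfl⟩
      have hex : ∃ b, (w, b) ∈ arcs m := exists_out_arc hw.1 hw.2
      simp only [hf, hex, dif_pos]
      exact hex.choose_spec
    calc S.ncard = (f '' S).ncard := (Set.ncard_image_of_injOn hinj).symm
      _ ≤ (arcs m).ncard := Set.ncard_le_ncard hsub (arcs_finite m)
  calc bFun m = (S ∪ T).ncard := by rw [bFun, hST]
    _ ≤ S.ncard + T.ncard := Set.ncard_union_le _ _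
    _ ≤ aFun m + 1 := by omega

/-- The recursive conditions for `v` expressed via the arc-counting function `a`. -/
theorem v_recursion_arcs (n : ℕ) :
    vFun (4 * n + 2) = vFun (2 * n) + aFun n ∧
    vFun (4 * n + 4) = vFun (2 * n + 2) + aFun n := by
  have h1 := bFun_4n2 n
  have h2 := aFun_4n2 n
  have h3 := bFun_le (2 * n)
  have h4 := bFun_4n4 n
  have h5 := aFun_4n4 n
  have h6 := bFun_le (2 * n + 2)
  unfold vFun
  omega
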